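/- Let (P^t) be the semigroup of a continuous-time Markov process on an ε-geodesic Polish metric space (E,d), for some ε > 0. Then the infimum of the coarse Ricci curvature κ(x,y) over all pairs of distinct points (x,y) ∈ E² equals the infimum of κ(x,y) over all pairs of distinct points with d(x,y) ≤ ε. -/

import Mathlib

open MeasureTheory ProbabilityTheory Filter Topology Set
open scoped ENNReal NNReal

/-- The L¹ Wasserstein distance between two measures on a metric space:
infimum over all couplings (measures on `E × E` with the prescribed marginals)
of the integral of the distance. -/
noncomputable def W1 {E : Type*} [MetricSpace E] [MeasurableSpace E] (μ ν : Measure E) : ℝ≥0∞ :=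
  ⨅ (ξ : Measure (E × E)) (_ : ξ.map Prod.fst = μ ∧ ξ.map Prod.snd = ν),
    ∫⁻ p, edist p.1 p.2 ∂ξ

/-- The quantity `(1 - W₁(P_x^t, P_y^t)/d(x,y)) / t`, as an extended real number. -/
noncomputable def curvRatio {E : Type*} [MetricSpace E] [MeasurableSpace E]
    (P : ℝ → Kernel E E) (x y : E) (t : ℝ) : EReal :=
  (1 - (W1 (P t x) (P t y) : EReal) / ((ENNReal.ofReal (dist x y)) : EReal)) / (t : EReal)

/-- The coarse Ricci curvature `κ(x,y)`: the liminf as `t → 0⁺` of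
`(1 - W₁(P_x^t, P_y^t)/d(x,y)) / t`. -/
noncomputable def kappa {E : Type*} [MetricSpace E] [MeasurableSpace E]
    (P : ℝ → Kernel E E) (x y : E) : EReal :=
  Filter.liminf (curvRatio P x y) (𝓝[>] 0)

/-- The upper coarse Ricci curvature `κ̄(x,y)`: the limsup as `t → 0⁺` of
`(1 - W₁(P_x^t, P_y^t)/d(x,y)) / t`. -/
noncomputable def kappaBar {E : Type*} [MetricSpace E] [MeasurableSpace E]
    (P : ℝ → Kernel E E) (x y : E) : EReal :=
  Filter.limsup (curvRatio P x y) (𝓝[>] 0)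

/-- `P` is a Markov semigroup of transition kernels: each `P t` is a Markov kernel,
`P 0` is the identity, and the Chapman-Kolmogorov semigroup property holds. -/
def IsMarkovSemigroup {E : Type*} [MeasurableSpace E] (P : ℝ → Kernel E E) : Prop :=
  (∀ t, IsMarkovKernel (P t)) ∧ (P 0 = Kernel.id) ∧
    ∀ s t : ℝ, 0 ≤ s → 0 ≤ t → P (s + t) = (P t).comp (P s)


/-- The metric space `E` is `ε`-geodesic: any two points are joined by a finite chain of
points with consecutive distances at most `ε` whose total length is the distance. -/
def IsEpsGeodesic (E : Type*) [MetricSpace E] (ε : ℝ) : Prop :=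
  ∀ x y : E, ∃ (n : ℕ) (c : ℕ → E), c 0 = x ∧ c n = y ∧
    (∀ i < n, dist (c i) (c (i + 1)) ≤ ε) ∧
    (∑ i ∈ Finset.range n, dist (c i) (c (i + 1))) = dist x y

/-! Split `x → y` along an `ε`-chain `x = c₀, …, cₙ = y`. By the triangle inequality for `W₁`
(gluing couplings), `W₁(P_x^t, P_y^t) ≤ ∑ᵢ W₁(P_{cᵢ}^t, P_{cᵢ₊₁}^t)`, and since
`∑ᵢ d(cᵢ, cᵢ₊₁) = d(x, y)`, the ratio `1 - W₁/d` for `(x, y)` is at least the smallest of the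
ratios of the links. Hence `κ(x, y)` is at least the infimum of the curvatures of the links, all of
which are pairs at distance `≤ ε`. -/

section Wasserstein

variable {E : Type*} [MetricSpace E] [MeasurableSpace E]

theorem W1_le_lintegral {μ ν : Measure E} {ξ : Measure (E × E)}
    (h : ξ.map Prod.fst = μ ∧ ξ.map Prod.snd = ν) : W1 μ ν ≤ ∫⁻ p, edist p.1 p.2 ∂ξ :=
  iInf₂_le ξ h

theorem W1_self (μ : Measure E) : W1 μ μ = 0 := by
  have hdiag : Measurable fun x : E => (x, x) := measurable_id.prodMk measurable_id
  refine le_antisymm ?_ zero_le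
  calc W1 μ μ ≤ ∫⁻ p, edist p.1 p.2 ∂(μ.map fun x => (x, x)) := by
        refine W1_le_lintegral ⟨?_, ?_⟩ <;>
          rw [Measure.map_map (by fun_prop) hdiag] <;> exact Measure.map_id
    _ ≤ ∫⁻ x, edist x x ∂μ := lintegral_map_le _ _
    _ = 0 := by simp

-- The gluing lemma of optimal transport: attach to `ξ₁` the disintegration of `ξ₂` along `β`.
theorem MeasureTheory.Measure.exists_glue_of_map_snd_eq_map_fst {α β γ : Type*}
    [MeasurableSpace α] [MeasurableSpace β] [MeasurableSpace γ] [StandardBorelSpace γ]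
    [Nonempty γ] {ξ₁ : Measure (α × β)} [SFinite ξ₁] {ξ₂ : Measure (β × γ)} [IsFiniteMeasure ξ₂]
    (h : ξ₁.map Prod.snd = ξ₂.map Prod.fst) :
    ∃ θ : Measure ((α × β) × γ), θ.map Prod.fst = ξ₁ ∧ θ.map (fun p => (p.1.2, p.2)) = ξ₂ := by
  let η : Kernel (α × β) γ := ξ₂.condKernel.comap Prod.snd measurable_snd
  have hg : Measurable fun p : (α × β) × γ => (p.1.2, p.2) := by fun_prop
  refine ⟨ξ₁ ⊗ₘ η, Measure.fst_compProd ξ₁ η, ?_⟩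
  ext s hs
  rw [Measure.map_apply hg hs, Measure.compProd_apply (hg hs)]
  change ∫⁻ p, ξ₂.condKernel p.2 (Prod.mk p.2 ⁻¹' s) ∂ξ₁ = ξ₂ s
  rw [← lintegral_map (Kernel.measurable_kernel_prodMk_left hs) measurable_snd, h]
  conv_rhs => rw [← ξ₂.disintegrate ξ₂.condKernel]
  rw [Measure.compProd_apply hs]
  rfl

theorem W1_triangle [PolishSpace E] [BorelSpace E] (μ ν ρ : Measure E) [IsProbabilityMeasure ν] :
    W1 μ ρ ≤ W1 μ ν + W1 ν ρ := by
  refine ENNReal.le_iInf₂_add_iInf₂ fun ξ₁ h₁ ξ₂ h₂ => ?_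
  have : IsProbabilityMeasure (ξ₂.map Prod.fst) := h₂.1 ▸ inferInstance
  have : IsProbabilityMeasure ξ₂ := Measure.isProbabilityMeasure_of_map Prod.fst
  have : IsProbabilityMeasure (ξ₁.map Prod.snd) := h₁.2 ▸ inferInstance
  have : IsProbabilityMeasure ξ₁ := Measure.isProbabilityMeasure_of_map Prod.snd
  have : Nonempty E := Measure.nonempty_of_neZero ν
  obtain ⟨θ, hθ₁, hθ₂⟩ :=
    Measure.exists_glue_of_map_snd_eq_map_fst (h₁.2.trans h₂.1.symm)
  have h₁₂ : Measurable fun p : (E × E) × E => (p.1.2, p.2) := by fun_prop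
  have h₁₃ : Measurable fun p : (E × E) × E => (p.1.1, p.2) := by fun_prop
  have hcoupling : (θ.map fun p => (p.1.1, p.2)).map Prod.fst = μ ∧
      (θ.map fun p => (p.1.1, p.2)).map Prod.snd = ρ := by
    rw [Measure.map_map measurable_fst h₁₃, Measure.map_map measurable_snd h₁₃, ← h₁.1, ← h₂.2,
      ← hθ₁, ← hθ₂, Measure.map_map measurable_fst measurable_fst,
      Measure.map_map measurable_snd h₁₂]
    exact ⟨rfl, rfl⟩
  calc W1 μ ρ ≤ ∫⁻ p, edist p.1.1 p.2 ∂θ := by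
        simpa only [lintegral_map measurable_edist h₁₃] using W1_le_lintegral hcoupling
    _ ≤ ∫⁻ p, edist p.1.1 p.1.2 + edist p.1.2 p.2 ∂θ :=
        lintegral_mono fun p => edist_triangle _ _ _
    _ = (∫⁻ p, edist p.1.1 p.1.2 ∂θ) + ∫⁻ p, edist p.1.2 p.2 ∂θ :=
        lintegral_add_left (measurable_edist.comp measurable_fst) _
    _ = (∫⁻ p, edist p.1 p.2 ∂ξ₁) + ∫⁻ p, edist p.1 p.2 ∂ξ₂ := by
        rw [← hθ₁, ← hθ₂, lintegral_map measurable_edist measurable_fst,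
          lintegral_map measurable_edist h₁₂]

theorem W1_le_sum [PolishSpace E] [BorelSpace E] (μ : ℕ → Measure E)
    [∀ i, IsProbabilityMeasure (μ i)] (n : ℕ) :
    W1 (μ 0) (μ n) ≤ ∑ i ∈ Finset.range n, W1 (μ i) (μ (i + 1)) := by
  induction n with
  | zero => simp [W1_self]
  | succ n ih =>
    rw [Finset.sum_range_succ]
    exact (W1_triangle _ (μ n) _).trans (add_le_add_left ih _)

end Wasserstein

theorem EReal.mul_le_one_of_coe_le_one_sub_div_div {a D : ℝ≥0∞} {t m : ℝ} (ht : 0 < t)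
    (h : (m : EReal) ≤ (1 - (a : EReal) / D) / t) : m * t ≤ 1 := by
  have hle : 1 - (a : EReal) / D ≤ 1 := by
    simpa using EReal.sub_le_sub (le_refl (1 : EReal))
      (EReal.div_nonneg (EReal.coe_ennreal_nonneg a) (EReal.coe_ennreal_nonneg D))
  have := h.trans (EReal.div_le_div_right_of_nonneg (by exact_mod_cast ht.le) hle)
  rwa [← EReal.coe_one, ← EReal.coe_div, EReal.coe_le_coe_iff, le_div_iff₀ ht] at this

theorem EReal.coe_le_one_sub_div_div_iff {a D : ℝ≥0∞} (hD0 : D ≠ 0) (hD : D ≠ ⊤) {t m : ℝ}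
    (ht : 0 < t) (hm : m * t ≤ 1) :
    (m : EReal) ≤ (1 - (a : EReal) / D) / t ↔ a ≤ ENNReal.ofReal (1 - m * t) * D := by
  lift D to ℝ≥0 using hD
  have hDpos : (0 : ℝ) < D := NNReal.coe_pos.2 (pos_iff_ne_zero.2 (by simpa using hD0))
  rw [EReal.coe_nnreal_eq_coe_real]
  induction a with
  | top =>
    rw [EReal.coe_ennreal_top, EReal.top_div_of_pos_ne_top (by exact_mod_cast hDpos)
      (EReal.coe_ne_top _), EReal.sub_top, EReal.bot_div_of_pos_ne_top (by exact_mod_cast ht)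
      (EReal.coe_ne_top _)]
    simp [ENNReal.mul_eq_top]
  | coe α =>
    rw [EReal.coe_nnreal_eq_coe_real, ← ENNReal.ofReal_coe_nnreal (p := D),
      ← ENNReal.ofReal_mul (by linarith), ← ENNReal.ofReal_coe_nnreal,
      ENNReal.ofReal_le_ofReal_iff (by nlinarith), ← EReal.coe_div, ← EReal.coe_one,
      ← EReal.coe_sub, ← EReal.coe_div, EReal.coe_le_coe_iff, le_div_iff₀ ht,
      le_sub_comm, div_le_iff₀ hDpos]

theorem exists_lt_ne_succ_of_ne {α : Type*} {c : ℕ → α} {n : ℕ} (h : c 0 ≠ c n) :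
    ∃ i < n, c i ≠ c (i + 1) := by
  by_contra! hc
  have : ∀ k ≤ n, c 0 = c k := by
    intro k
    induction k with
    | zero => exact fun _ => rfl
    | succ k ih => exact fun hk => (ih (k.le_succ.trans hk)).trans (hc k hk)
  exact h (this n le_rfl)

section Curvature

variable {E : Type*} [MetricSpace E] [PolishSpace E] [MeasurableSpace E] [BorelSpace E]
  {P : ℝ → Kernel E E} {x y : E} {n : ℕ} {c : ℕ → E}

theorem coe_le_curvRatio_of_chain {t : ℝ} [IsMarkovKernel (P t)] (ht : 0 < t) (hxy : x ≠ y)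
    (hc0 : c 0 = x) (hcn : c n = y)
    (hsum : ∑ i ∈ Finset.range n, dist (c i) (c (i + 1)) = dist x y) {m : ℝ}
    (hm : ∀ i < n, c i ≠ c (i + 1) → (m : EReal) ≤ curvRatio P (c i) (c (i + 1)) t) :
    (m : EReal) ≤ curvRatio P x y t := by
  obtain ⟨i₀, hi₀, hne⟩ := exists_lt_ne_succ_of_ne (c := c) (n := n) (by rwa [hc0, hcn])
  have hmt : m * t ≤ 1 := EReal.mul_le_one_of_coe_le_one_sub_div_div ht (hm i₀ hi₀ hne)
  have hratio {u v : E} (huv : u ≠ v) : (m : EReal) ≤ curvRatio P u v t ↔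
      W1 (P t u) (P t v) ≤ ENNReal.ofReal (1 - m * t) * ENNReal.ofReal (dist u v) :=
    EReal.coe_le_one_sub_div_div_iff (by simpa using dist_pos.2 huv) ENNReal.ofReal_ne_top ht hmt
  rw [hratio hxy]
  calc W1 (P t x) (P t y) ≤ ∑ i ∈ Finset.range n, W1 (P t (c i)) (P t (c (i + 1))) := by
        simpa only [hc0, hcn] using W1_le_sum (fun i => P t (c i)) n
    _ ≤ ∑ i ∈ Finset.range n,
          ENNReal.ofReal (1 - m * t) * ENNReal.ofReal (dist (c i) (c (i + 1))) := by
        refine Finset.sum_le_sum fun i hi => ?_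
        by_cases hci : c i = c (i + 1)
        · simp [hci, W1_self]
        · exact (hratio hci).1 (hm i (Finset.mem_range.1 hi) hci)
    _ = ENNReal.ofReal (1 - m * t) * ENNReal.ofReal (dist x y) := by
        rw [← Finset.mul_sum, ← ENNReal.ofReal_sum_of_nonneg fun _ _ => dist_nonneg, hsum]

theorem le_kappa_of_chain (hP : ∀ t, IsMarkovKernel (P t)) (hxy : x ≠ y) (hc0 : c 0 = x)
    (hcn : c n = y) (hsum : ∑ i ∈ Finset.range n, dist (c i) (c (i + 1)) = dist x y) {K : EReal}
    (hK : ∀ i < n, c i ≠ c (i + 1) → K ≤ kappa P (c i) (c (i + 1))) :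
    K ≤ kappa P x y := by
  refine EReal.ge_of_forall_gt_iff_ge.1 fun m hm => le_liminf_of_le (by isBoundedDefault) ?_
  have hlinks : ∀ᶠ t in 𝓝[>] 0, ∀ i ∈ Finset.range n, c i ≠ c (i + 1) →
      (m : EReal) ≤ curvRatio P (c i) (c (i + 1)) t := by
    refine (Finset.range n).eventually_all.2 fun i hi => ?_
    by_cases hci : c i = c (i + 1)
    · exact Eventually.of_forall fun _ h => absurd hci h
    · filter_upwards [eventually_lt_of_lt_liminf (hm.trans_le (hK i (Finset.mem_range.1 hi) hci))]
        with t h _ using h.le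
  filter_upwards [hlinks, self_mem_nhdsWithin] with t hlinks_t ht
  exact coe_le_curvRatio_of_chain ht hxy hc0 hcn hsum fun i hi => hlinks_t i (Finset.mem_range.2 hi)

end Curvature

theorem iInf_kappa_eq_iInf_kappa_of_epsGeodesic_general
    {E : Type*} [MetricSpace E] [PolishSpace E] [MeasurableSpace E] [BorelSpace E]
    (P : ℝ → Kernel E E) (hP : IsMarkovSemigroup P)
    (ε : ℝ) (hgeo : IsEpsGeodesic E ε) :
    ⨅ (p : E × E) (_ : p.1 ≠ p.2), kappa P p.1 p.2
      = ⨅ (p : E × E) (_ : p.1 ≠ p.2 ∧ dist p.1 p.2 ≤ ε), kappa P p.1 p.2 := by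
  refine le_antisymm (le_iInf₂ fun p hp => iInf₂_le p hp.1) (le_iInf₂ fun ⟨x, y⟩ hxy => ?_)
  obtain ⟨n, c, hc0, hcn, hstep, hsum⟩ := hgeo x y
  exact le_kappa_of_chain hP.1 hxy hc0 hcn hsum fun i hi hci =>
    iInf₂_le (c i, c (i + 1)) ⟨hci, hstep i hi⟩

/-- On an `ε`-geodesic Polish metric space, the infimum of the coarse Ricci
curvature over all pairs of distinct points equals the infimum over pairs of distinct points
at distance at most `ε`. -/
theorem iInf_kappa_eq_iInf_kappa_of_epsGeodesic
    {E : Type*} [MetricSpace E] [PolishSpace E] [MeasurableSpace E] [BorelSpace E]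
    (P : ℝ → Kernel E E) (hP : IsMarkovSemigroup P)
    (ε : ℝ) (hε : 0 < ε) (hgeo : IsEpsGeodesic E ε) :
    ⨅ (p : E × E) (_ : p.1 ≠ p.2), kappa P p.1 p.2
      = ⨅ (p : E × E) (_ : p.1 ≠ p.2 ∧ dist p.1 p.2 ≤ ε), kappa P p.1 p.2 :=
  iInf_kappa_eq_iInf_kappa_of_epsGeodesic_general P hP ε hgeo
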